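/- arXiv:1506.03301 — 6 statements merged into one kernel-verified Lean document; each statement's English description precedes it below -/
import Mathlib

section
/- Let B = [[a, b], [-b, a]] be nonzero and C = [[c, d], [d, -c]]. The two singular values of B + C are (‖B‖_F + ‖C‖_F)/√2 and |‖B‖_F − ‖C‖_F|/√2. -/
open Matrix

/-- The two singular values of `B + C`, where `B` is a nonzero similarity matrix and `C` is an
anti-similarity matrix, are `(‖B‖_F + ‖C‖_F)/√2` and `|‖B‖_F − ‖C‖_F|/√2`: equivalently, the
eigenvalues of `(B+C)ᵀ (B+C)` (whose square roots are the singular values) are exactly the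
squares of these two numbers, as expressed by the characteristic polynomial factorization. -/
theorem singular_values_of_sim_plus_antisim (a b c d : ℝ)
    (B C : Matrix (Fin 2) (Fin 2) ℝ)
    (hB : B = !![a, b; -b, a]) (hC : C = !![c, d; d, -c])
    (hBne : (a, b) ≠ (0, 0))
    (σ₁ σ₂ : ℝ)
    (hσ₁ : σ₁ = (Real.sqrt (∑ i, ∑ j, (B i j) ^ 2) + Real.sqrt (∑ i, ∑ j, (C i j) ^ 2)) / Real.sqrt 2)
    (hσ₂ : σ₂ = |Real.sqrt (∑ i, ∑ j, (B i j) ^ 2) - Real.sqrt (∑ i, ∑ j, (C i j) ^ 2)| / Real.sqrt 2) :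
    ∀ x : ℝ, (x • (1 : Matrix (Fin 2) (Fin 2) ℝ) - (B + C)ᵀ * (B + C)).det
      = (x - σ₁ ^ 2) * (x - σ₂ ^ 2) := by
  subst hB hC
  intro x
  have hsum : (∑ i, ∑ j, ((!![a, b; -b, a] : Matrix (Fin 2) (Fin 2) ℝ) i j) ^ 2)
      = a ^ 2 + b ^ 2 + (b ^ 2 + a ^ 2) := by
    simp [Fin.sum_univ_two]
  have hsum' : (∑ i, ∑ j, ((!![c, d; d, -c] : Matrix (Fin 2) (Fin 2) ℝ) i j) ^ 2)
      = c ^ 2 + d ^ 2 + (d ^ 2 + c ^ 2) := by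
    simp [Fin.sum_univ_two]
  rw [hsum] at hσ₁ hσ₂
  rw [hsum'] at hσ₁ hσ₂
  set S := Real.sqrt (a ^ 2 + b ^ 2 + (b ^ 2 + a ^ 2)) with hSdef
  set T := Real.sqrt (c ^ 2 + d ^ 2 + (d ^ 2 + c ^ 2)) with hTdef
  have hS : S ^ 2 = a ^ 2 + b ^ 2 + (b ^ 2 + a ^ 2) := Real.sq_sqrt (by positivity)
  have hT : T ^ 2 = c ^ 2 + d ^ 2 + (d ^ 2 + c ^ 2) := Real.sq_sqrt (by positivity)
  have h2 : (Real.sqrt 2) ^ 2 = 2 := Real.sq_sqrt (by norm_num)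
  have h2ne : Real.sqrt 2 ≠ 0 := by positivity
  have hσ₁2 : σ₁ ^ 2 = (S + T) ^ 2 / 2 := by
    rw [hσ₁, div_pow, h2]
  have hσ₂2 : σ₂ ^ 2 = (S - T) ^ 2 / 2 := by
    rw [hσ₂, div_pow, h2, sq_abs]
  rw [hσ₁2, hσ₂2]
  have hM : (!![a, b; -b, a] + !![c, d; d, -c] : Matrix (Fin 2) (Fin 2) ℝ)ᵀ = !![a + c, -b + d; b + d, a + -c] := by
    ext i j
    fin_cases i <;> fin_cases j <;> simp [Matrix.transpose_apply]
  rw [hM]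
  simp [Matrix.det_fin_two, Matrix.mul_apply, Fin.sum_univ_two, Matrix.one_apply]
  rw [show (x - (S + T) ^ 2 / 2) * (x - (S - T) ^ 2 / 2)
      = x ^ 2 - (S ^ 2 + T ^ 2) * x + (S ^ 2 - T ^ 2) ^ 2 / 4 from by ring, hS, hT]
  ring
end

section
/- Let B be a nonzero 2×2 similarity matrix and C a 2×2 anti-similarity matrix with μ := ‖C‖_F/‖B‖_F < 1. Then the condition number of B + C (ratio of largest to smallest singular value) equals (1 + μ)/(1 − μ). -/
open Matrix

set_option maxHeartbeats 1000000

/-- The condition number (ratio of largest to smallest singular value) of `B + C`, with `B` a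
nonzero similarity matrix and `C` an anti-similarity matrix with distortion `μ = ‖C‖_F/‖B‖_F < 1`,
equals `(1 + μ)/(1 − μ)`. Singular values `s₁ ≥ s₂ ≥ 0` are characterized as the square roots of
the eigenvalues of `(B+C)ᵀ (B+C)`, via the characteristic polynomial. -/
theorem condition_number_eq (a b c d : ℝ)
    (B C : Matrix (Fin 2) (Fin 2) ℝ)
    (hB : B = !![a, b; -b, a]) (hC : C = !![c, d; d, -c])
    (hBne : (a, b) ≠ (0, 0))
    (μ : ℝ)
    (hμdef : μ = Real.sqrt (∑ i, ∑ j, (C i j) ^ 2) / Real.sqrt (∑ i, ∑ j, (B i j) ^ 2))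
    (hμ : μ < 1)
    (s₁ s₂ : ℝ) (hs₁ : 0 ≤ s₁) (hs₂ : 0 ≤ s₂) (hord : s₂ ≤ s₁)
    (heig : ∀ x : ℝ, (x • (1 : Matrix (Fin 2) (Fin 2) ℝ) - (B + C)ᵀ * (B + C)).det
      = (x - s₁ ^ 2) * (x - s₂ ^ 2)) :
    s₁ / s₂ = (1 + μ) / (1 - μ) := by
  subst hB hC
  have key0 := heig 0
  have key1 := heig 1
  simp [Matrix.det_fin_two, Matrix.mul_apply, Fin.sum_univ_succ, Matrix.one_apply,
    Matrix.smul_apply] at key0 key1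
  set r := Real.sqrt (a ^ 2 + b ^ 2) with hrdef
  set p := Real.sqrt (c ^ 2 + d ^ 2) with hpdef
  have hab : 0 < a ^ 2 + b ^ 2 := by
    rcases lt_or_eq_of_le (by positivity : (0:ℝ) ≤ a ^ 2 + b ^ 2) with h | h
    · exact h
    · exfalso; apply hBne
      have ha : a = 0 := by nlinarith [sq_nonneg a, sq_nonneg b]
      have hb : b = 0 := by nlinarith [sq_nonneg a, sq_nonneg b]
      simp [ha, hb]
  have hr2 : r ^ 2 = a ^ 2 + b ^ 2 := Real.sq_sqrt (by positivity)
  have hp2 : p ^ 2 = c ^ 2 + d ^ 2 := Real.sq_sqrt (by positivity)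
  have hrpos : 0 < r := Real.sqrt_pos.mpr hab
  have hp0 : 0 ≤ p := Real.sqrt_nonneg _
  -- μ = p / r
  have hμ' : μ = p / r := by
    rw [hμdef]
    have h1 : (∑ i : Fin 2, ∑ j : Fin 2, (!![c, d; d, -c] : Matrix (Fin 2) (Fin 2) ℝ) i j ^ 2)
        = 2 * (c ^ 2 + d ^ 2) := by
      simp [Fin.sum_univ_succ]; ring
    have h2 : (∑ i : Fin 2, ∑ j : Fin 2, (!![a, b; -b, a] : Matrix (Fin 2) (Fin 2) ℝ) i j ^ 2)
        = 2 * (a ^ 2 + b ^ 2) := by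
      simp [Fin.sum_univ_succ]; ring
    rw [h1, h2, Real.sqrt_mul (by norm_num), Real.sqrt_mul (by norm_num)]
    rw [mul_div_mul_left _ _ (by positivity : Real.sqrt 2 ≠ 0)]
  have hplt : p < r := by
    rw [hμ'] at hμ
    exact (div_lt_one hrpos).mp hμ
  -- product and sum of squares
  have e0 : s₁ ^ 2 * s₂ ^ 2 = (a ^ 2 + b ^ 2 - c ^ 2 - d ^ 2) ^ 2 := by
    linear_combination -key0
  have e1 : s₁ ^ 2 + s₂ ^ 2 = 2 * (a ^ 2 + b ^ 2 + c ^ 2 + d ^ 2) := by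
    linear_combination key1 - key0
  clear key0 key1 heig
  have hprod2 : s₁ ^ 2 * s₂ ^ 2 = (r ^ 2 - p ^ 2) ^ 2 := by
    rw [hr2, hp2]; linear_combination e0
  have hsum2 : s₁ ^ 2 + s₂ ^ 2 = 2 * (r ^ 2 + p ^ 2) := by
    rw [hr2, hp2]; linear_combination e1
  have hprod : s₁ * s₂ = r ^ 2 - p ^ 2 := by
    have h1 : (s₁ * s₂) ^ 2 = (r ^ 2 - p ^ 2) ^ 2 := by nlinarith [hprod2]
    have h2 : 0 ≤ s₁ * s₂ := mul_nonneg hs₁ hs₂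
    have h3 : 0 ≤ r ^ 2 - p ^ 2 := by nlinarith
    nlinarith
  have hsum : s₁ + s₂ = 2 * r := by
    have h1 : (s₁ + s₂) ^ 2 = (2 * r) ^ 2 := by nlinarith
    nlinarith [add_nonneg hs₁ hs₂, hrpos]
  have hdiff : s₁ - s₂ = 2 * p := by
    have h1 : (s₁ - s₂) ^ 2 = (2 * p) ^ 2 := by nlinarith
    nlinarith [sub_nonneg.mpr hord]
  have hs1v : s₁ = r + p := by linarith
  have hs2v : s₂ = r - p := by linarith
  have hs2pos : 0 < s₂ := by rw [hs2v]; linarith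
  have hpr1 : p / r < 1 := (div_lt_one hrpos).mpr hplt
  rw [hs1v, hs2v, hμ']
  rw [div_eq_div_iff (by linarith : r - p ≠ 0) (by linarith : 1 - p / r ≠ 0)]
  field_simp
end

section
/- Let 0 < μ < 1. The set of planar affine maps f(x) = (B + C)x + t, with B a similarity matrix, C an anti-similarity matrix, satisfying ‖C‖_F ≤ μ‖B‖_F, mapping the x-axis into itself, and preserving its positive direction (the first coordinate of f(0) is strictly less than that of f(e₁)), is convex: if f₁ and f₂ are two such maps and 0 ≤ λ ≤ 1, then λf₁ + (1−λ)f₂ is also such a map. -/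
open Matrix

/-- The similarity matrix `[[a, b], [-b, a]]`. -/
def simMat (a b : ℝ) : Matrix (Fin 2) (Fin 2) ℝ := !![a, b; -b, a]

/-- The anti-similarity matrix `[[c, d], [d, -c]]`. -/
def antiMat (c d : ℝ) : Matrix (Fin 2) (Fin 2) ℝ := !![c, d; d, -c]

/-- Frobenius norm of a 2×2 real matrix. -/
noncomputable def frobNorm (M : Matrix (Fin 2) (Fin 2) ℝ) : ℝ :=
  Real.sqrt (∑ i, ∑ j, (M i j) ^ 2)

/-- `f` is a μ-bounded-distortion affine map sending the x-axis into itself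
and preserving its positive direction. -/
def IsEBD (μ : ℝ) (f : (Fin 2 → ℝ) → (Fin 2 → ℝ)) : Prop :=
  ∃ a b c d t₁ t₂ : ℝ,
    (∀ x, f x = (simMat a b + antiMat c d).mulVec x + ![t₁, t₂]) ∧
    frobNorm (antiMat c d) ≤ μ * frobNorm (simMat a b) ∧
    (∀ s : ℝ, f ![s, 0] 1 = 0) ∧
    f 0 0 < f ![1, 0] 0

lemma frob_anti (c d : ℝ) : frobNorm (antiMat c d) = Real.sqrt (2 * (c^2 + d^2)) := by
  unfold frobNorm antiMat
  congr 1
  simp [Fin.sum_univ_two]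
  ring

lemma frob_sim (a b : ℝ) : frobNorm (simMat a b) = Real.sqrt (2 * (a^2 + b^2)) := by
  unfold frobNorm simMat
  congr 1
  simp [Fin.sum_univ_two]
  ring

lemma ebd_extract (μ : ℝ) (hμ0 : 0 < μ) (hμ1 : μ < 1) (f : (Fin 2 → ℝ) → (Fin 2 → ℝ))
    (h : IsEBD μ f) :
    ∃ a c d t₁ : ℝ,
      (∀ x, f x = (simMat a d + antiMat c d).mulVec x + ![t₁, 0]) ∧
      c^2 + (1 - μ^2) * d^2 ≤ μ^2 * a^2 ∧ 0 < a ∧ 0 < a + c := by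
  obtain ⟨a, b, c, d, t₁, t₂, hf, hn, hax, hdir⟩ := h
  have key : ∀ s : ℝ, (d - b) * s + t₂ = 0 := by
    intro s
    have hs := hax s
    rw [hf] at hs
    simp [simMat, antiMat, Matrix.mulVec, dotProduct, Fin.sum_univ_two] at hs
    linarith
  have ht₂ : t₂ = 0 := by have := key 0; linarith
  have hbd : b = d := by have := key 1; nlinarith
  subst hbd ht₂
  have hk : (0:ℝ) < 1 - μ^2 := by nlinarith
  have hdir' : 0 < a + c := by
    rw [hf, hf] at hdir
    simp [simMat, antiMat, Matrix.mulVec, dotProduct, Fin.sum_univ_two] at hdir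
    linarith
  rw [frob_anti, frob_sim] at hn
  have hsq : 2 * (c^2 + b^2) ≤ μ^2 * (2 * (a^2 + b^2)) := by
    have h1 : Real.sqrt (2 * (c^2 + b^2)) ^ 2 ≤ (μ * Real.sqrt (2 * (a^2 + b^2))) ^ 2 := by
      apply pow_le_pow_left₀ (Real.sqrt_nonneg _) hn
    rw [Real.sq_sqrt (by positivity), mul_pow, Real.sq_sqrt (by positivity)] at h1
    linarith
  have hc : c^2 + (1 - μ^2) * b^2 ≤ μ^2 * a^2 := by nlinarith
  have ha : 0 < a := by
    by_contra hcon
    push_neg at hcon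
    have h1 : 0 < c - a := by linarith
    nlinarith [mul_pos hdir' h1, sq_nonneg b, mul_nonneg (sq_nonneg a) hk.le]
  exact ⟨a, c, b, t₁, hf, hc, ha, hdir'⟩

set_option maxHeartbeats 1000000 in
theorem ebd_maps_convex (μ : ℝ) (hμ0 : 0 < μ) (hμ1 : μ < 1)
    (f₁ f₂ : (Fin 2 → ℝ) → (Fin 2 → ℝ))
    (h₁ : IsEBD μ f₁) (h₂ : IsEBD μ f₂)
    (lam : ℝ) (hl0 : 0 ≤ lam) (hl1 : lam ≤ 1) :
    IsEBD μ (fun x => lam • f₁ x + (1 - lam) • f₂ x) := by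
  obtain ⟨a₁, c₁, d₁, t₁, hf₁, hn₁, ha₁, hd₁⟩ := ebd_extract μ hμ0 hμ1 f₁ h₁
  obtain ⟨a₂, c₂, d₂, t₂, hf₂, hn₂, ha₂, hd₂⟩ := ebd_extract μ hμ0 hμ1 f₂ h₂
  set lam' := 1 - lam with hlam'
  have hl0' : 0 ≤ lam' := by rw [hlam']; linarith
  set a := lam * a₁ + lam' * a₂ with hadef
  set c := lam * c₁ + lam' * c₂ with hcdef
  set d := lam * d₁ + lam' * d₂ with hddef
  set t := lam * t₁ + lam' * t₂ with htdef
  have hk : (0:ℝ) < 1 - μ^2 := by nlinarith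
  have ha : 0 < a := by
    rcases lt_or_eq_of_le hl0 with h | h
    · have h1 : 0 < lam * a₁ := mul_pos h ha₁
      have h2 : 0 ≤ lam' * a₂ := mul_nonneg hl0' ha₂.le
      rw [hadef]; linarith
    · have h1 : lam' = 1 := by rw [hlam', ← h]; ring
      rw [hadef, ← h, h1]; simpa using ha₂
  -- Cauchy–Schwarz cross term
  have cross : c₁ * c₂ + (1 - μ^2) * (d₁ * d₂) ≤ μ^2 * (a₁ * a₂) := by
    have hR : 0 < μ^2 * (a₁ * a₂) := by positivity
    have hL2 : (c₁ * c₂ + (1 - μ^2) * (d₁ * d₂))^2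
        ≤ (c₁^2 + (1 - μ^2) * d₁^2) * (c₂^2 + (1 - μ^2) * d₂^2) := by
      nlinarith [mul_nonneg hk.le (sq_nonneg (c₁ * d₂ - c₂ * d₁)),
        mul_nonneg (mul_nonneg hk.le hk.le) (sq_nonneg (d₁ * d₂))]
    have hp₁ : (0:ℝ) ≤ c₁^2 + (1 - μ^2) * d₁^2 :=
      add_nonneg (sq_nonneg _) (mul_nonneg hk.le (sq_nonneg _))
    have h2 : (c₁^2 + (1 - μ^2) * d₁^2) * (c₂^2 + (1 - μ^2) * d₂^2)
        ≤ (μ^2 * a₁^2) * (μ^2 * a₂^2) :=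
      mul_le_mul hn₁ hn₂ (add_nonneg (sq_nonneg _) (mul_nonneg hk.le (sq_nonneg _)))
        (by positivity)
    nlinarith [hL2, h2, hR]
  have p₁ : 0 ≤ lam^2 * (μ^2 * a₁^2 - (c₁^2 + (1 - μ^2) * d₁^2)) :=
    mul_nonneg (sq_nonneg lam) (by linarith)
  have p₂ : 0 ≤ lam'^2 * (μ^2 * a₂^2 - (c₂^2 + (1 - μ^2) * d₂^2)) :=
    mul_nonneg (sq_nonneg lam') (by linarith)
  have q : 0 ≤ (lam * lam') * (μ^2 * (a₁ * a₂) - (c₁ * c₂ + (1 - μ^2) * (d₁ * d₂))) :=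
    mul_nonneg (mul_nonneg hl0 hl0') (by linarith)
  have hn : c^2 + (1 - μ^2) * d^2 ≤ μ^2 * a^2 := by
    have e : μ^2 * a^2 - (c^2 + (1 - μ^2) * d^2)
        = lam^2 * (μ^2 * a₁^2 - (c₁^2 + (1 - μ^2) * d₁^2))
        + lam'^2 * (μ^2 * a₂^2 - (c₂^2 + (1 - μ^2) * d₂^2))
        + 2 * ((lam * lam') * (μ^2 * (a₁ * a₂) - (c₁ * c₂ + (1 - μ^2) * (d₁ * d₂)))) := by
      rw [hadef, hcdef, hddef]; ring
    linarith [e, p₁, p₂, q]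
  refine ⟨a, d, c, d, t, 0, ?_, ?_, ?_, ?_⟩
  · intro x
    simp only [hf₁, hf₂]
    funext i
    fin_cases i <;>
      · simp [simMat, antiMat, Matrix.mulVec, dotProduct, Fin.sum_univ_two,
          Matrix.vecHead, Matrix.vecTail, Function.comp, hadef, hcdef, hddef, htdef]
        ring
  · rw [frob_anti, frob_sim]
    have h1 : 2 * (c^2 + d^2) ≤ μ^2 * (2 * (a^2 + d^2)) := by nlinarith
    calc Real.sqrt (2 * (c^2 + d^2)) ≤ Real.sqrt (μ^2 * (2 * (a^2 + d^2))) :=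
          Real.sqrt_le_sqrt h1
      _ = μ * Real.sqrt (2 * (a^2 + d^2)) := by
          rw [Real.sqrt_mul (by positivity), Real.sqrt_sq hμ0.le]
  · intro s
    simp only [hf₁, hf₂]
    simp [simMat, antiMat, Matrix.mulVec, dotProduct, Fin.sum_univ_two,
      Matrix.vecHead, Matrix.vecTail, Function.comp]
  · have hc2 : c^2 ≤ μ^2 * a^2 := by nlinarith [mul_nonneg hk.le (sq_nonneg d)]
    have hca : -a < c := by nlinarith [hc2, mul_pos hk (mul_pos ha ha), ha]
    simp only [hf₁, hf₂]
    simp [simMat, antiMat, Matrix.mulVec, dotProduct, Fin.sum_univ_two,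
      Matrix.vecHead, Matrix.vecTail, Function.comp]
    nlinarith [hca, hadef, hcdef, htdef, hlam']
end

section
/- The distortion measure is invariant under composition with similarities: if f(x) = (B + C)x + t is an affine map with B a nonzero similarity matrix and C an anti-similarity matrix, and g₁, g₂ are orientation-preserving invertible similarity transformations of the plane, then the affine map g₂ ∘ f ∘ g₁⁻¹ has the same distortion measure μ = ‖C‖_F/‖B‖_F as f; that is, writing the linear part of g₂ ∘ f ∘ g₁⁻¹ as B* + C* with B* a similarity matrix and C* an anti-similarity matrix, one has ‖C*‖_F/‖B*‖_F = ‖C‖_F/‖B‖_F. -/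
open Matrix

/-- Composing an affine map with orientation-preserving similarity transformations on both
sides does not change its distortion measure `μ = ‖C‖_F / ‖B‖_F`: the linear part of
`g₂ ∘ f ∘ g₁⁻¹` is `S₂ (B + C) S₁⁻¹`, and decomposing it as `B* + C*` one has
`‖C*‖_F / ‖B*‖_F = ‖C‖_F / ‖B‖_F`. -/
theorem distortion_invariant_under_similarity
    (a b c d p₁ q₁ p₂ q₂ : ℝ)
    (hB : (a, b) ≠ (0, 0)) (hS₁ : (p₁, q₁) ≠ (0, 0)) (hS₂ : (p₂, q₂) ≠ (0, 0))
    (aStar bStar cStar dStar : ℝ)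
    (hdecomp : simMat p₂ q₂ * (simMat a b + antiMat c d) * (simMat p₁ q₁)⁻¹
      = simMat aStar bStar + antiMat cStar dStar) :
    frobNorm (antiMat cStar dStar) / frobNorm (simMat aStar bStar)
      = frobNorm (antiMat c d) / frobNorm (simMat a b) := by
  have h1 : p₁ ≠ 0 ∨ q₁ ≠ 0 := by
    by_contra h; push_neg at h; exact hS₁ (by simp [h.1, h.2])
  have h2 : p₂ ≠ 0 ∨ q₂ ≠ 0 := by
    by_contra h; push_neg at h; exact hS₂ (by simp [h.1, h.2])
  have hab : a ≠ 0 ∨ b ≠ 0 := by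
    by_contra h; push_neg at h; exact hB (by simp [h.1, h.2])
  have hs1 : 0 < p₁ ^ 2 + q₁ ^ 2 := by
    rcases h1 with h | h <;> positivity
  have hs2 : 0 < p₂ ^ 2 + q₂ ^ 2 := by
    rcases h2 with h | h <;> positivity
  have habp : 0 < a ^ 2 + b ^ 2 := by
    rcases hab with h | h <;> positivity
  have hdet : IsUnit (simMat p₁ q₁).det := by
    rw [isUnit_iff_ne_zero]
    simp only [simMat, Matrix.det_fin_two_of]
    nlinarith
  have heq : simMat p₂ q₂ * (simMat a b + antiMat c d)
      = (simMat aStar bStar + antiMat cStar dStar) * simMat p₁ q₁ := by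
    have := congrArg (· * simMat p₁ q₁) hdecomp
    simpa [Matrix.mul_assoc, Matrix.nonsing_inv_mul _ hdet] using this
  have E1 := congrFun (congrFun heq 0) 0
  have E2 := congrFun (congrFun heq 0) 1
  have E3 := congrFun (congrFun heq 1) 0
  have E4 := congrFun (congrFun heq 1) 1
  simp [simMat, antiMat, Matrix.mul_apply, Fin.sum_univ_two] at E1 E2 E3 E4
  have F1 : p₂*a - q₂*b = aStar*p₁ - bStar*q₁ := by linarith
  have F2 : p₂*b + q₂*a = aStar*q₁ + bStar*p₁ := by linarith
  have F3 : p₂*c + q₂*d = cStar*p₁ - dStar*q₁ := by linarith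
  have F4 : p₂*d - q₂*c = cStar*q₁ + dStar*p₁ := by linarith
  have GB : (aStar^2 + bStar^2) * (p₁^2 + q₁^2) = (p₂^2 + q₂^2) * (a^2 + b^2) := by
    linear_combination -(p₂*a - q₂*b + (aStar*p₁ - bStar*q₁)) * F1
      - (p₂*b + q₂*a + (aStar*q₁ + bStar*p₁)) * F2
  have GC : (cStar^2 + dStar^2) * (p₁^2 + q₁^2) = (p₂^2 + q₂^2) * (c^2 + d^2) := by
    linear_combination -(p₂*c + q₂*d + (cStar*p₁ - dStar*q₁)) * F3
      - (p₂*d - q₂*c + (cStar*q₁ + dStar*p₁)) * F4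
  have habs : 0 < aStar ^ 2 + bStar ^ 2 := by
    rcases lt_or_eq_of_le (by positivity : (0:ℝ) ≤ aStar^2+bStar^2) with h | h
    · exact h
    · exfalso; rw [← h] at GB; nlinarith
  have key : (cStar^2+dStar^2)*(a^2+b^2) = (c^2+d^2)*(aStar^2+bStar^2) := by
    apply mul_right_cancel₀ hs1.ne'
    linear_combination (a^2+b^2) * GC - (c^2+d^2) * GB
  have fB : frobNorm (simMat a b) = Real.sqrt (2*(a^2+b^2)) := by
    simp only [frobNorm, simMat, Fin.sum_univ_two, Matrix.of_apply, Matrix.cons_val',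
      Matrix.cons_val_zero, Matrix.cons_val_one, Matrix.head_cons, Matrix.head_fin_const,
      Matrix.empty_val', Matrix.cons_val_fin_one]
    ring_nf
  have fBs : frobNorm (simMat aStar bStar) = Real.sqrt (2*(aStar^2+bStar^2)) := by
    simp only [frobNorm, simMat, Fin.sum_univ_two, Matrix.of_apply, Matrix.cons_val',
      Matrix.cons_val_zero, Matrix.cons_val_one, Matrix.head_cons, Matrix.head_fin_const,
      Matrix.empty_val', Matrix.cons_val_fin_one]
    ring_nf
  have fC : frobNorm (antiMat c d) = Real.sqrt (2*(c^2+d^2)) := by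
    simp only [frobNorm, antiMat, Fin.sum_univ_two, Matrix.of_apply, Matrix.cons_val',
      Matrix.cons_val_zero, Matrix.cons_val_one, Matrix.head_cons, Matrix.head_fin_const,
      Matrix.empty_val', Matrix.cons_val_fin_one]
    ring_nf
  have fCs : frobNorm (antiMat cStar dStar) = Real.sqrt (2*(cStar^2+dStar^2)) := by
    simp only [frobNorm, antiMat, Fin.sum_univ_two, Matrix.of_apply, Matrix.cons_val',
      Matrix.cons_val_zero, Matrix.cons_val_one, Matrix.head_cons, Matrix.head_fin_const,
      Matrix.empty_val', Matrix.cons_val_fin_one]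
    ring_nf
  rw [fB, fBs, fC, fCs]
  rw [div_eq_div_iff (by positivity) (by positivity)]
  rw [← Real.sqrt_mul (by positivity), ← Real.sqrt_mul (by positivity)]
  congr 1
  linear_combination 4 * key
end

section
/- The set of 2×2 matrices M = B + C with B = [[a,b],[-b,a]] nonzero, C = [[c,d],[d,-c]], satisfying ‖C‖_F ≤ μ‖B‖_F for a fixed 0 < μ < 1, is not convex: there exist two such matrices M₁, M₂ whose average (M₁ + M₂)/2 does not satisfy the constraint (in particular, for μ = 1/2 one may take M₁ the identity and M₂ the rotation by angle π). -/
/-- For any fixed `0 < μ < 1`, the set of μ-bounded-distortion matrices `B + C`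
(with `B` a nonzero similarity matrix, `C` an anti-similarity matrix,
`‖C‖_F ≤ μ ‖B‖_F`) is not convex. -/
theorem bd_set_not_convex (μ : ℝ) (hμ0 : 0 < μ) (hμ1 : μ < 1) :
    ¬ Convex ℝ {M : Matrix (Fin 2) (Fin 2) ℝ |
      ∃ a b c d : ℝ, (a, b) ≠ (0, 0) ∧
        M = !![a, b; -b, a] + !![c, d; d, -c] ∧
        Real.sqrt (∑ i, ∑ j, ((!![c, d; d, -c] : Matrix (Fin 2) (Fin 2) ℝ) i j) ^ 2)
          ≤ μ * Real.sqrt (∑ i, ∑ j, ((!![a, b; -b, a] : Matrix (Fin 2) (Fin 2) ℝ) i j) ^ 2)} := by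
  intro h
  have hA : (!![1, 0; 0, 1] : Matrix (Fin 2) (Fin 2) ℝ) ∈ {M : Matrix (Fin 2) (Fin 2) ℝ |
      ∃ a b c d : ℝ, (a, b) ≠ (0, 0) ∧
        M = !![a, b; -b, a] + !![c, d; d, -c] ∧
        Real.sqrt (∑ i, ∑ j, ((!![c, d; d, -c] : Matrix (Fin 2) (Fin 2) ℝ) i j) ^ 2)
          ≤ μ * Real.sqrt (∑ i, ∑ j, ((!![a, b; -b, a] : Matrix (Fin 2) (Fin 2) ℝ) i j) ^ 2)} := by
    refine ⟨1, 0, 0, 0, by simp, ?_, ?_⟩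
    · ext i j; fin_cases i <;> fin_cases j <;> simp
    · simp [Fin.sum_univ_two]
      positivity
  have hB : (!![-1, 0; 0, -1] : Matrix (Fin 2) (Fin 2) ℝ) ∈ {M : Matrix (Fin 2) (Fin 2) ℝ |
      ∃ a b c d : ℝ, (a, b) ≠ (0, 0) ∧
        M = !![a, b; -b, a] + !![c, d; d, -c] ∧
        Real.sqrt (∑ i, ∑ j, ((!![c, d; d, -c] : Matrix (Fin 2) (Fin 2) ℝ) i j) ^ 2)
          ≤ μ * Real.sqrt (∑ i, ∑ j, ((!![a, b; -b, a] : Matrix (Fin 2) (Fin 2) ℝ) i j) ^ 2)} := by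
    refine ⟨-1, 0, 0, 0, by simp, ?_, ?_⟩
    · ext i j; fin_cases i <;> fin_cases j <;> simp
    · simp [Fin.sum_univ_two]
      positivity
  have hmid := h hA hB (by norm_num : (0:ℝ) ≤ 1/2) (by norm_num : (0:ℝ) ≤ 1/2) (by norm_num)
  have hzero : (1/2 : ℝ) • (!![1, 0; 0, 1] : Matrix (Fin 2) (Fin 2) ℝ)
      + (1/2 : ℝ) • (!![-1, 0; 0, -1] : Matrix (Fin 2) (Fin 2) ℝ) = 0 := by
    ext i j; fin_cases i <;> fin_cases j <;> simp
  rw [hzero] at hmid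
  obtain ⟨a, b, c, d, hne, heq, -⟩ := hmid
  have h00 := congrFun (congrFun heq 0) 0
  have h01 := congrFun (congrFun heq 0) 1
  have h10 := congrFun (congrFun heq 1) 0
  have h11 := congrFun (congrFun heq 1) 1
  simp [Matrix.add_apply] at h00 h01 h10 h11
  apply hne
  have ha : a = 0 := by linarith [h00, h11]
  have hb : b = 0 := by linarith [h01, h10]
  simp [ha, hb]
end

section
/- Let 0 < p < 2, ε > 0, and define g_{p,ε}(r) = r^p for r > ε and g_{p,ε}(r) = (p/2)ε^{p−2}r² + (1−p/2)ε^p for 0 ≤ r ≤ ε; define the majorizer G_{p,ε}(r, s) = (p/2)s^{p−2}r² + (1−p/2)s^p for s > ε and G_{p,ε}(r, s) = (p/2)ε^{p−2}r² + (1−p/2)ε^p for 0 ≤ s ≤ ε. Then for all r, s ≥ 0: (i) G_{p,ε}(s, s) = g_{p,ε}(s), and (ii) G_{p,ε}(r, s) ≥ g_{p,ε}(r). -/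
open Real

/-- Core concavity inequality: `r^p ≤ (p/2) s^(p-2) r² + (1-p/2) s^p`. -/
lemma core_ineq (p : ℝ) (hp0 : 0 < p) (hp2 : p < 2) {r s : ℝ} (hr : 0 ≤ r) (hs : 0 < s) :
    r ^ p ≤ p / 2 * s ^ (p - 2) * r ^ 2 + (1 - p / 2) * s ^ p := by
  have hx : (0:ℝ) ≤ (r / s) ^ (2:ℕ) := by positivity
  have hb := rpow_one_add_le_one_add_mul_self (s := (r/s)^(2:ℕ) - 1)
    (by linarith) (p := p/2) (by linarith) (by linarith)
  rw [add_sub_cancel] at hb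
  have h1 : ((r/s)^(2:ℕ)) ^ (p/2) = (r/s) ^ p := by
    rw [← rpow_natCast (r/s) 2, ← rpow_mul (by positivity)]
    norm_num [mul_div_cancel₀]
  rw [h1] at hb
  have hspos : (0:ℝ) < s ^ p := rpow_pos_of_pos hs p
  have key : (r/s) ^ p * s ^ p ≤ (1 + p/2 * ((r/s)^(2:ℕ) - 1)) * s ^ p :=
    mul_le_mul_of_nonneg_right hb hspos.le
  have h2 : (r/s) ^ p * s ^ p = r ^ p := by
    rw [← mul_rpow (by positivity) hs.le, div_mul_cancel₀]
    exact (ne_of_gt hs)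
  have h3 : s ^ (p - 2) = s ^ p / s ^ (2:ℕ) := by
    rw [← rpow_natCast s 2, ← rpow_sub hs]
    norm_num
  rw [h2] at key
  calc r ^ p ≤ (1 + p/2 * ((r/s)^(2:ℕ) - 1)) * s ^ p := key
    _ = p / 2 * s ^ (p - 2) * r ^ 2 + (1 - p / 2) * s ^ p := by
        rw [h3]; field_simp; ring

lemma quad_mono (p : ℝ) (hp0 : 0 < p) (hp2 : p < 2) {r a b : ℝ} (hr : 0 ≤ r)
    (hra : r ≤ a) (ha : 0 < a) (hab : a ≤ b) :
    p / 2 * a ^ (p - 2) * r ^ 2 + (1 - p / 2) * a ^ p ≤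
      p / 2 * b ^ (p - 2) * r ^ 2 + (1 - p / 2) * b ^ p := by
  have hB2A2 : b ^ (p - 2) ≤ a ^ (p - 2) :=
    rpow_le_rpow_of_nonpos ha hab (by linarith)
  have hAa : a ^ (p - 2) * a ^ 2 = a ^ p := by
    rw [← rpow_natCast a 2, ← rpow_add ha]; norm_num
  have hcore := core_ineq p hp0 hp2 (le_trans hr hra) (lt_of_lt_of_le ha hab) (r := a)
  nlinarith [mul_nonneg (sub_nonneg.mpr hB2A2) (sub_nonneg.mpr
    (by nlinarith : r ^ 2 ≤ a ^ 2)), sq_nonneg r]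

/-- The smoothed zero-norm surrogate. -/
noncomputable def gFun (p ε r : ℝ) : ℝ :=
  if r ≤ ε then p / 2 * ε ^ (p - 2) * r ^ 2 + (1 - p / 2) * ε ^ p else r ^ p

/-- The quadratic majorizer of `gFun`. -/
noncomputable def GFun (p ε r s : ℝ) : ℝ :=
  if s ≤ ε then p / 2 * ε ^ (p - 2) * r ^ 2 + (1 - p / 2) * ε ^ p
  else p / 2 * s ^ (p - 2) * r ^ 2 + (1 - p / 2) * s ^ p

/-- `G_{p,ε}` majorizes `g_{p,ε}` and touches it on the diagonal. -/
theorem majorizer_properties (p ε : ℝ) (hp0 : 0 < p) (hp2 : p < 2) (hε : 0 < ε) :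
    (∀ s : ℝ, 0 ≤ s → GFun p ε s s = gFun p ε s) ∧
    (∀ r s : ℝ, 0 ≤ r → 0 ≤ s → gFun p ε r ≤ GFun p ε r s) := by
  constructor
  · intro s hs
    unfold GFun gFun
    split_ifs with h
    · rfl
    · have hspos : 0 < s := lt_trans hε (not_le.mp h)
      have : s ^ (p - 2) * s ^ 2 = s ^ p := by
        rw [← rpow_natCast s 2, ← rpow_add hspos]; norm_num
      nlinarith [this]
  · intro r s hr hs
    unfold GFun gFun
    split_ifs with h1 h2 h2
    · exact le_refl _
    · -- r ≤ ε < s : monotonicity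
      exact quad_mono p hp0 hp2 hr h1 hε (le_of_lt (not_le.mp h2))
    · -- s ≤ ε < r : core at ε
      exact core_ineq p hp0 hp2 hr hε
    · -- ε < r, ε < s : core at s
      exact core_ineq p hp0 hp2 hr (lt_trans hε (not_le.mp h2))
end
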